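/- arXiv:1908.01228 — 2 statements merged into one kernel-verified Lean document; each statement's English description precedes it below -/
import Mathlib

section
/- Let L > 0, let u < v be real numbers, and let f, g : [u,v] → ℝ be L-Lipschitz functions. Let M = sup_{x ∈ [u,v]} |f(x) − g(x)|. Then D(f,g)² ≥ inf_{x ∈ [u,v]} (1/200)·∑_{i=1}^{200} ( max(M − 2L·|z_i − x|, 0) )². -/
/-!
Let `h = |f - g|`, which is `2L`-Lipschitz, so it attains its supremum `M` at some `x₀ ∈ [u, v]`.
Lipschitz continuity gives `max (M - 2L|y - x₀|) 0 ≤ h y` at every `y ∈ [u, v]`, in particular at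
every grid point, so the mean of squares defining `D(f, g)²` dominates the value of the minimised
function at `x₀`, and hence its infimum.
-/

open Set Finset

def IsLipschitzOn (L : ℝ) (s : Set ℝ) (f : ℝ → ℝ) : Prop :=
  ∀ x ∈ s, ∀ x' ∈ s, |f x - f x'| ≤ L * |x - x'|

namespace IsLipschitzOn

variable {L K : ℝ} {s : Set ℝ} {f g : ℝ → ℝ}

theorem lipschitzOnWith (hf : IsLipschitzOn L s f) : LipschitzOnWith L.toNNReal f s :=
  LipschitzOnWith.of_dist_le_mul fun x hx x' hx' =>
    (hf x hx x' hx').trans <| by rw [Real.dist_eq]; gcongr; exact Real.le_coe_toNNReal L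

theorem continuousOn (hf : IsLipschitzOn L s f) : ContinuousOn f s :=
  hf.lipschitzOnWith.continuousOn

theorem sub (hf : IsLipschitzOn L s f) (hg : IsLipschitzOn K s g) :
    IsLipschitzOn (L + K) s (fun x => f x - g x) := fun x hx x' hx' =>
  calc |f x - g x - (f x' - g x')| = |(f x - f x') - (g x - g x')| := by rw [sub_sub_sub_comm]
    _ ≤ |f x - f x'| + |g x - g x'| := abs_sub _ _
    _ ≤ (L + K) * |x - x'| := by linarith [hf x hx x' hx', hg x hx x' hx']

theorem abs (hf : IsLipschitzOn L s f) : IsLipschitzOn L s (fun x => |f x|) := fun x hx x' hx' =>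
  (abs_abs_sub_abs_le_abs_sub _ _).trans (hf x hx x' hx')

theorem max_sub_mul_abs_sub_le (hf : IsLipschitzOn L s f) {x₀ y : ℝ} (hx₀ : x₀ ∈ s) (hy : y ∈ s)
    (hfy : 0 ≤ f y) : max (f x₀ - L * |y - x₀|) 0 ≤ f y :=
  max_le (by linarith [(abs_le.1 (hf y hy x₀ hx₀)).1]) hfy

end IsLipschitzOn

theorem convex_combination_mem_Icc {u v : ℝ} (huv : u ≤ v) {i n : ℕ} (hi : i ≤ n) :
    (1 - (i : ℝ) / n) * u + ((i : ℝ) / n) * v ∈ Icc u v := by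
  have hin : (i : ℝ) / n ≤ 1 := div_le_one_of_le₀ (by exact_mod_cast hi) n.cast_nonneg
  simpa only [smul_eq_mul] using convex_Icc u v (left_mem_Icc.2 huv) (right_mem_Icc.2 huv)
    (sub_nonneg.2 hin) (by positivity : 0 ≤ (i : ℝ) / n) (sub_add_cancel _ _)

open Finset in
theorem stmt_1_general (L u v : ℝ) (huv : u < v) (f g : ℝ → ℝ)
    (hf : ∀ x ∈ Set.Icc u v, ∀ x' ∈ Set.Icc u v, |f x - f x'| ≤ L * |x - x'|)
    (hg : ∀ x ∈ Set.Icc u v, ∀ x' ∈ Set.Icc u v, |g x - g x'| ≤ L * |x - x'|)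
    (z : ℕ → ℝ) (hz : ∀ i, z i = (1 - (i : ℝ) / 200) * u + ((i : ℝ) / 200) * v)
    (M : ℝ) (hM : M = sSup ((fun x => |f x - g x|) '' Set.Icc u v)) :
    Real.sqrt ((1 / 200) * ∑ i ∈ Finset.Icc 1 200, (f (z i) - g (z i)) ^ 2) ^ 2
      ≥ sInf ((fun x => (1 / 200) *
          ∑ i ∈ Finset.Icc 1 200, (max (M - 2 * L * |z i - x|) 0) ^ 2) '' Set.Icc u v) := by
  have hdiff : IsLipschitzOn (2 * L) (Icc u v) (fun x => |f x - g x|) := by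
    simpa only [two_mul] using (IsLipschitzOn.sub hf hg).abs
  obtain ⟨x₀, hx₀, hMx₀⟩ := isCompact_Icc.exists_sSup_image_eq (nonempty_Icc.2 huv.le)
    hdiff.continuousOn
  have hz_mem (i : ℕ) (hi : i ∈ Finset.Icc 1 200) : z i ∈ Icc u v := by
    rw [hz]
    exact_mod_cast convex_combination_mem_Icc huv.le (Finset.mem_Icc.1 hi).2
  have hgrid (i : ℕ) (hi : i ∈ Finset.Icc 1 200) :
      max (M - 2 * L * |z i - x₀|) 0 ^ 2 ≤ (f (z i) - g (z i)) ^ 2 := by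
    rw [← sq_abs (f (z i) - g (z i)), hM, hMx₀]
    exact pow_le_pow_left₀ (le_max_right _ _)
      (hdiff.max_sub_mul_abs_sub_le hx₀ (hz_mem i hi) (abs_nonneg _)) 2
  have hbdd : BddBelow ((fun x => (1 / 200 : ℝ) *
      ∑ i ∈ Finset.Icc 1 200, (max (M - 2 * L * |z i - x|) 0) ^ 2) '' Icc u v) :=
    ⟨0, by rintro _ ⟨y, -, rfl⟩; positivity⟩
  rw [Real.sq_sqrt (by positivity)]
  exact (csInf_le hbdd ⟨x₀, hx₀, rfl⟩).trans
    (mul_le_mul_of_nonneg_left (sum_le_sum hgrid) (by norm_num))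

open Finset in
theorem stmt_1 (L u v : ℝ) (hL : 0 < L) (huv : u < v) (f g : ℝ → ℝ)
    (hf : ∀ x ∈ Set.Icc u v, ∀ x' ∈ Set.Icc u v, |f x - f x'| ≤ L * |x - x'|)
    (hg : ∀ x ∈ Set.Icc u v, ∀ x' ∈ Set.Icc u v, |g x - g x'| ≤ L * |x - x'|)
    (z : ℕ → ℝ) (hz : ∀ i, z i = (1 - (i : ℝ) / 200) * u + ((i : ℝ) / 200) * v)
    (M : ℝ) (hM : M = sSup ((fun x => |f x - g x|) '' Set.Icc u v)) :
    Real.sqrt ((1 / 200) * ∑ i ∈ Finset.Icc 1 200, (f (z i) - g (z i)) ^ 2) ^ 2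
      ≥ sInf ((fun x => (1 / 200) *
          ∑ i ∈ Finset.Icc 1 200, (max (M - 2 * L * |z i - x|) 0) ^ 2) '' Set.Icc u v) :=
  stmt_1_general L u v huv f g hf hg z hz M hM
end

section
/- Let L > 0, let κ : [0,1] → ℝ be a 2L-Lipschitz function, and let i ≥ 1 be an integer. For ℓ ∈ {1, …, 2^i} let w_i(ℓ) = [(ℓ−1)·2^{−i}, ℓ·2^{−i}]. Then ∑_{ℓ=1}^{2^i} 𝟙[ min_{x ∈ w_i(ℓ)} κ(x) ≤ 20·L·2^{−i} ] ≤ 2^i · μ({ x ∈ [0,1] : κ(x) ≤ 22·L·2^{−i} }), where μ denotes Lebesgue measure. -/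
/-!
By the Lipschitz bound, a dyadic interval of length `2⁻ⁱ` on which `κ` gets down to
`20 L 2⁻ⁱ` lies entirely in `{κ ≤ 22 L 2⁻ⁱ}`. The half-open versions of these intervals are
disjoint and each has measure `2⁻ⁱ`, so their number is at most `2ⁱ` times the measure of that set.
-/

open Function MeasureTheory Set

lemma sub_le_sInf_image_Icc {f : ℝ → ℝ} {K a b x : ℝ} (hK : 0 ≤ K)
    (hf : ∀ y ∈ Icc a b, ∀ z ∈ Icc a b, |f y - f z| ≤ K * |y - z|) (hx : x ∈ Icc a b) :
    f x - K * (b - a) ≤ sInf (f '' Icc a b) := by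
  refine le_csInf ((nonempty_Icc.2 (hx.1.trans hx.2)).image f) ?_
  rintro _ ⟨y, hy, rfl⟩
  have hxy : |x - y| ≤ b - a :=
    abs_sub_le_iff.2 ⟨by linarith [hx.2, hy.1], by linarith [hx.1, hy.2]⟩
  linarith [le_abs_self (f x - f y), hf x hx y hy, mul_le_mul_of_nonneg_left hxy hK]

lemma Icc_subset_setOf_le_of_sInf_image_Icc_le {f : ℝ → ℝ} {K a b c : ℝ} (hK : 0 ≤ K)
    (hf : ∀ y ∈ Icc a b, ∀ z ∈ Icc a b, |f y - f z| ≤ K * |y - z|)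
    (hc : sInf (f '' Icc a b) ≤ c) :
    Icc a b ⊆ {x | f x ≤ c + K * (b - a)} := fun x hx => show f x ≤ _ by
  linarith [sub_le_sInf_image_Icc hK hf hx]

lemma pairwise_disjoint_Ico_natCast_sub_one_mul {h : ℝ} (hh : 0 ≤ h) :
    Pairwise (Disjoint on fun n : ℕ => Ico (((n : ℝ) - 1) * h) (n * h)) := by
  have hmono : Monotone fun n : ℕ => ((n : ℝ) - 1) * h := fun _ _ hmn =>
    mul_le_mul_of_nonneg_right (sub_le_sub_right (Nat.cast_le.2 hmn) 1) hh
  simpa [Order.succ_eq_add_one] using hmono.pairwise_disjoint_on_Ico_succ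

lemma card_mul_ofReal_le_volume {h : ℝ} (hh : 0 ≤ h) {T : Finset ℕ} {S : Set ℝ}
    (hT : ∀ n ∈ T, Ico (((n : ℝ) - 1) * h) (n * h) ⊆ S) :
    T.card * ENNReal.ofReal h ≤ volume S := calc
  T.card * ENNReal.ofReal h = ∑ n ∈ T, volume (Ico (((n : ℝ) - 1) * h) (n * h)) := by
    simp [Real.volume_Ico, ← sub_mul]
  _ = volume (⋃ n ∈ T, Ico (((n : ℝ) - 1) * h) (n * h)) :=
    (measure_biUnion_finset ((pairwise_disjoint_Ico_natCast_sub_one_mul hh).set_pairwise _)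
      fun _ _ => measurableSet_Ico).symm
  _ ≤ volume S := measure_mono (iUnion₂_subset hT)

lemma Icc_natCast_sub_one_mul_subset_Icc {n N : ℕ} (hn : n ∈ Finset.Icc 1 N) {h : ℝ}
    (hh : 0 ≤ h) (hN : N * h = 1) : Icc (((n : ℝ) - 1) * h) (n * h) ⊆ Icc 0 1 := by
  obtain ⟨h1, hN'⟩ := Finset.mem_Icc.1 hn
  refine Icc_subset_Icc (mul_nonneg (by simpa using h1) hh) (hN ▸ ?_)
  gcongr

open MeasureTheory Finset in
open Classical in
theorem stmt_9_general (L : ℝ) (κ : ℝ → ℝ)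
    (hκ : ∀ x ∈ Set.Icc (0:ℝ) 1, ∀ x' ∈ Set.Icc (0:ℝ) 1,
      |κ x - κ x'| ≤ 2 * L * |x - x'|)
    (i : ℕ) :
    ∑ ℓ ∈ Finset.Icc (1:ℕ) (2 ^ i),
        (if sInf (κ '' Set.Icc (((ℓ : ℝ) - 1) * 2 ^ (-(i:ℤ))) ((ℓ : ℝ) * 2 ^ (-(i:ℤ))))
            ≤ 20 * L * 2 ^ (-(i:ℤ)) then (1:ℝ) else 0)
      ≤ 2 ^ i *
        (volume {x : ℝ | x ∈ Set.Icc (0:ℝ) 1 ∧ κ x ≤ 22 * L * 2 ^ (-(i:ℤ))}).toReal := by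
  set h : ℝ := 2 ^ (-(i:ℤ))
  set S := {x : ℝ | x ∈ Set.Icc (0:ℝ) 1 ∧ κ x ≤ 22 * L * h}
  have hh : 0 < h := by positivity
  have hpow : ((2 ^ i : ℕ) : ℝ) * h = 1 := by simp [h, zpow_neg]
  have hL : 0 ≤ 2 * L := by
    have := hκ 1 (by simp) 0 (by simp)
    norm_num at this
    linarith [abs_nonneg (κ 1 - κ 0)]
  set T := (Finset.Icc 1 (2 ^ i)).filter
    fun ℓ : ℕ => sInf (κ '' Icc (((ℓ : ℝ) - 1) * h) (ℓ * h)) ≤ 20 * L * h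
  have hsub : ∀ ℓ ∈ T, Ico (((ℓ : ℝ) - 1) * h) (ℓ * h) ⊆ S := by
    intro ℓ hℓ x hx
    obtain ⟨hℓ, hinf⟩ := Finset.mem_filter.1 hℓ
    have hI := Icc_natCast_sub_one_mul_subset_Icc hℓ hh.le hpow
    have := Icc_subset_setOf_le_of_sInf_image_Icc_le hL
      (fun y hy z hz => hκ y (hI hy) z (hI hz)) hinf (Ico_subset_Icc_self hx)
    exact ⟨hI (Ico_subset_Icc_self hx), by linarith [this.out]⟩
  have hS : volume S ≠ ⊤ :=
    ((measure_mono fun _ hx => hx.1).trans_lt (by simp : volume (Icc (0:ℝ) 1) < ⊤)).ne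
  have hcard := card_mul_ofReal_le_volume hh.le hsub
  rw [← ENNReal.ofReal_natCast, ← ENNReal.ofReal_mul (by positivity),
    ENNReal.ofReal_le_iff_le_toReal hS] at hcard
  rw [Finset.sum_boole]
  calc (T.card : ℝ) = ((2 ^ i : ℕ) : ℝ) * (T.card * h) := by rw [mul_left_comm, hpow, mul_one]
    _ ≤ 2 ^ i * (volume S).toReal := by push_cast; gcongr

open MeasureTheory Finset in
open Classical in
theorem stmt_9 (L : ℝ) (hL : 0 < L) (κ : ℝ → ℝ)
    (hκ : ∀ x ∈ Set.Icc (0:ℝ) 1, ∀ x' ∈ Set.Icc (0:ℝ) 1,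
      |κ x - κ x'| ≤ 2 * L * |x - x'|)
    (i : ℕ) (hi : 1 ≤ i) :
    ∑ ℓ ∈ Finset.Icc (1:ℕ) (2 ^ i),
        (if sInf (κ '' Set.Icc (((ℓ : ℝ) - 1) * 2 ^ (-(i:ℤ))) ((ℓ : ℝ) * 2 ^ (-(i:ℤ))))
            ≤ 20 * L * 2 ^ (-(i:ℤ)) then (1:ℝ) else 0)
      ≤ 2 ^ i *
        (volume {x : ℝ | x ∈ Set.Icc (0:ℝ) 1 ∧ κ x ≤ 22 * L * 2 ^ (-(i:ℤ))}).toReal :=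
  stmt_9_general L κ hκ i
end
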